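/- Let X ∈ ℝ^{n×k} have rank k, K ∈ ℝ^{k×k}, W ∈ ℝ^{n×n}, ρ ≠ 0, and Ω = (Iₙ + ρW)(Iₙ + ρWᵀ) be positive definite. If there exist G₁, G₂ ∈ ℝ^{k×k} with WX = XG₁, WᵀX = XG₂, KG₁ = 0, and KG₂ = 0, then there exists a nonsingular G ∈ ℝ^{k×k} with ΩX = XG and KG = K. -/

import Mathlib

/-!
Since `X` intertwines `W` with `G₁` and `Wᵀ` with `G₂`, it intertwines both factors of `Ω`
with `1 + ρ • G₁` and `1 + ρ • G₂`, so `Ω * X = X * G` for their product `G`; and `K G = K`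
because `K` kills `G₁` and `G₂`. `G` is invertible because `X` has independent columns: from
`X * G * v = Ω * X * v`, injectivity of `Ω` and `X` gives injectivity of `G`.
-/

open Matrix

namespace Matrix

variable {l m n R K : Type*}

theorem mulVec_injective_of_rank_eq_card [Field K] [Fintype n] {X : Matrix m n K}
    (hX : X.rank = Fintype.card n) : Function.Injective X.mulVec := by
  rw [mulVec_injective_iff, linearIndependent_iff_card_eq_finrank_span]
  exact hX ▸ X.rank_eq_finrank_span_cols

theorem isUnit_of_mul_eq_mul_of_mulVec_injective [Field K] [Fintype m] [DecidableEq m]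
    [Fintype n] [DecidableEq n] {A : Matrix m m K} {X : Matrix m n K} {G : Matrix n n K}
    (hA : IsUnit A) (hX : Function.Injective X.mulVec) (hAX : A * X = X * G) : IsUnit G := by
  rw [← mulVec_injective_iff_isUnit] at hA ⊢
  refine Function.Injective.of_comp (f := X.mulVec) ?_
  have hcomp : X.mulVec ∘ G.mulVec = A.mulVec ∘ X.mulVec := by
    funext v
    simp only [Function.comp_apply, mulVec_mulVec, hAX]
  rw [hcomp]
  exact hA.comp hX

variable [CommRing R] [Fintype m] [DecidableEq m] [Fintype n] [DecidableEq n]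

theorem one_add_smul_mul_eq_mul_one_add_smul {W : Matrix m m R} {X : Matrix m n R}
    {G : Matrix n n R} (hWX : W * X = X * G) (c : R) :
    (1 + c • W) * X = X * (1 + c • G) := by
  rw [Matrix.add_mul, Matrix.one_mul, Matrix.smul_mul, hWX, Matrix.mul_add, Matrix.mul_one,
    Matrix.mul_smul]

theorem mul_one_add_smul_of_mul_eq_zero [Fintype l] {K : Matrix l n R} {G : Matrix n n R}
    (hKG : K * G = 0) (c : R) : K * (1 + c • G) = K := by
  rw [Matrix.mul_add, Matrix.mul_one, Matrix.mul_smul, hKG, smul_zero, add_zero]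

end Matrix

theorem stmt_13_general (n k : ℕ) (X : Matrix (Fin n) (Fin k) ℝ) (hX : X.rank = k)
    (K : Matrix (Fin k) (Fin k) ℝ) (W : Matrix (Fin n) (Fin n) ℝ)
    (ρ : ℝ)
    (Ω : Matrix (Fin n) (Fin n) ℝ)
    (hΩdef : Ω = (1 + ρ • W) * (1 + ρ • Wᵀ)) (hΩ : Ω.PosDef)
    (G₁ G₂ : Matrix (Fin k) (Fin k) ℝ)
    (hG₁ : W * X = X * G₁) (hG₂ : Wᵀ * X = X * G₂)
    (hKG₁ : K * G₁ = 0) (hKG₂ : K * G₂ = 0) :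
    ∃ G : Matrix (Fin k) (Fin k) ℝ, IsUnit G ∧ Ω * X = X * G ∧ K * G = K := by
  have hΩX : Ω * X = X * ((1 + ρ • G₁) * (1 + ρ • G₂)) := by
    rw [hΩdef, Matrix.mul_assoc, one_add_smul_mul_eq_mul_one_add_smul hG₂, ← Matrix.mul_assoc,
      one_add_smul_mul_eq_mul_one_add_smul hG₁, Matrix.mul_assoc]
  have hXinj : Function.Injective X.mulVec :=
    mulVec_injective_of_rank_eq_card (by rw [hX, Fintype.card_fin])
  refine ⟨_, isUnit_of_mul_eq_mul_of_mulVec_injective hΩ.isUnit hXinj hΩX, hΩX, ?_⟩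
  rw [← Matrix.mul_assoc, mul_one_add_smul_of_mul_eq_zero hKG₁,
    mul_one_add_smul_of_mul_eq_zero hKG₂]

theorem stmt_13 (n k : ℕ) (X : Matrix (Fin n) (Fin k) ℝ) (hX : X.rank = k)
    (K : Matrix (Fin k) (Fin k) ℝ) (W : Matrix (Fin n) (Fin n) ℝ)
    (ρ : ℝ) (hρ : ρ ≠ 0)
    (Ω : Matrix (Fin n) (Fin n) ℝ)
    (hΩdef : Ω = (1 + ρ • W) * (1 + ρ • Wᵀ)) (hΩ : Ω.PosDef)
    (G₁ G₂ : Matrix (Fin k) (Fin k) ℝ)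
    (hG₁ : W * X = X * G₁) (hG₂ : Wᵀ * X = X * G₂)
    (hKG₁ : K * G₁ = 0) (hKG₂ : K * G₂ = 0) :
    ∃ G : Matrix (Fin k) (Fin k) ℝ, IsUnit G ∧ Ω * X = X * G ∧ K * G = K :=
  stmt_13_general n k X hX K W ρ Ω hΩdef hΩ G₁ G₂ hG₁ hG₂ hKG₁ hKG₂
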